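/- arXiv:1609.05313 — 2 statements merged into one kernel-verified Lean document; each statement's English description precedes it below -/
import Mathlib

section
/- For all integers i ≥ 0 and j ≥ 2, the uniform B-spline basis function B_{i,j} : ℝ → ℝ is (j − 2)-times continuously differentiable on ℝ (in particular, for j = 2 it is continuous, and the cubic basis function B_{i,4} is of class C²). -/
/-!
Differentiating the Cox–de Boor recursion shows that, away from the integer knots,
`B i (j + 1)` has derivative `B i j - B (i + 1) j`. For `j ≥ 2` both sides are continuous:
`B i 2` is the hat function `max 0 (1 - |t - (i + 1)|)`, and continuity propagates through the
recursion. A continuous function whose derivative off a discrete set extends continuously is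
differentiable everywhere with that extension as derivative, so `B i (j + 1)` is `C¹` with
derivative `B i j - B (i + 1) j`, and induction on `j` lifts `C^(j-2)` to `C^(j-1)`.
-/

/-- Uniform B-spline basis functions `B i j` with integer knots `tᵢ = i`,
defined by the Cox–de Boor recursion. -/
noncomputable def B : ℕ → ℕ → ℝ → ℝ
  | _, 0, _ => 0
  | i, 1, t => if (i : ℝ) ≤ t ∧ t < (i : ℝ) + 1 then 1 else 0
  | i, (j+2), t =>
      ((t - (i : ℝ)) / ((j : ℝ) + 1)) * B i (j+1) t
        + (((i : ℝ) + ((j : ℝ) + 2) - t) / ((j : ℝ) + 1)) * B (i+1) (j+1) t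

open Set Filter Topology

theorem hasDerivAt_of_eventually_hasDerivAt_of_ne {E : Type*} [NormedAddCommGroup E]
    [NormedSpace ℝ E] {f g : ℝ → E} {x : ℝ} (hd : ∀ᶠ y in 𝓝[≠] x, HasDerivAt f (g y) y)
    (hf : ContinuousAt f x) (hg : ContinuousAt g x) : HasDerivAt f (g x) x := by
  rw [← nhdsLT_sup_nhdsGT, eventually_sup] at hd
  have hderiv {l : Filter ℝ} (hl : l ≤ 𝓝 x) (h : ∀ᶠ y in l, HasDerivAt f (g y) y) :
      Tendsto (deriv f) l (𝓝 (g x)) :=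
    (hg.mono_left hl).congr' (h.mono fun y hy => hy.deriv.symm)
  have hdiff : DifferentiableOn ℝ f {y | HasDerivAt f (g y) y} := fun y hy =>
    hy.differentiableAt.differentiableWithinAt
  have hleft : HasDerivWithinAt f (g x) (Iic x) x :=
    hasDerivWithinAt_Iic_of_tendsto_deriv hdiff hf.continuousWithinAt hd.1
      (hderiv nhdsWithin_le_nhds hd.1)
  have hright : HasDerivWithinAt f (g x) (Ici x) x :=
    hasDerivWithinAt_Ici_of_tendsto_deriv hdiff hf.continuousWithinAt hd.2
      (hderiv nhdsWithin_le_nhds hd.2)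
  simpa using hleft.union hright

theorem eventually_nhdsNE_notMem_range_intCast (n : ℤ) :
    ∀ᶠ y in 𝓝[≠] (n : ℝ), y ∉ range ((↑) : ℤ → ℝ) := by
  filter_upwards [nhdsWithin_le_nhds (Ioo_mem_nhds (sub_one_lt (n : ℝ)) (lt_add_one (n : ℝ))),
    self_mem_nhdsWithin] with y ⟨hlo, hhi⟩ hne
  rintro ⟨m, rfl⟩
  have : m = n := by
    have : n - 1 < m := by exact_mod_cast hlo
    have : m < n + 1 := by exact_mod_cast hhi
    omega
  exact hne (congrArg _ this)

lemma B_add_two (i j : ℕ) (t : ℝ) : B i (j + 2) t =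
    (t - i) / (j + 1) * B i (j + 1) t + (i + (j + 2) - t) / (j + 1) * B (i + 1) (j + 1) t := rfl

lemma B_one_eq_ite_floor (i : ℕ) (t : ℝ) : B i 1 t = if ⌊t⌋ = i then 1 else 0 := by
  simp only [B, Int.floor_eq_iff, Int.cast_natCast]

lemma hasDerivAt_B_one (i : ℕ) {t : ℝ} (ht : t ∉ range ((↑) : ℤ → ℝ)) :
    HasDerivAt (B i 1) 0 t := by
  have hlt : (⌊t⌋ : ℝ) < t := (Int.floor_le t).lt_of_ne fun h => ht ⟨_, h⟩
  have hconst : B i 1 =ᶠ[𝓝 t] fun _ => B i 1 t := by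
    filter_upwards [Ioo_mem_nhds hlt (Int.lt_floor_add_one t)] with s hs
    rw [B_one_eq_ite_floor, B_one_eq_ite_floor, Int.floor_eq_iff.2 ⟨hs.1.le, hs.2⟩]
  exact (hasDerivAt_const t _).congr_of_eventuallyEq hconst

/-- The recursion satisfied by the differences `B i j - B (i + 1) j`: it is what collapses the
product-rule derivative of the recursion to `B i (j + 1) - B (i + 1) (j + 1)`. -/
lemma B_sub_B_succ_recurrence (i j : ℕ) (t : ℝ) :
    j * (B i (j + 1) t - B (i + 1) (j + 1) t)
      = (t - i) * (B i j t - B (i + 1) j t)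
        + (i + j + 2 - t) * (B (i + 1) j t - B (i + 2) j t) := by
  cases j with
  | zero => simp [B]
  | succ k =>
      rw [B_add_two i k, B_add_two (i + 1) k]
      push_cast
      field_simp
      ring

lemma B_two_eq (i : ℕ) (t : ℝ) : B i 2 t = max 0 (1 - |t - (i + 1)|) := by
  simp only [B]
  push_cast
  split_ifs with h₁ h₂ h₂
  · linarith [h₁.2, h₂.1]
  · rw [abs_of_nonpos (by linarith [h₁.2]), max_eq_right (by linarith [h₁.1])]
    ring
  · rw [abs_of_nonneg (by linarith [h₂.1]), max_eq_right (by linarith [h₂.2])]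
    ring
  · have hfar : 1 ≤ |t - (i + 1)| := by
      rcases le_or_gt (i + 1 : ℝ) t with h | h
      · rw [abs_of_nonneg (by linarith)]
        linarith [not_lt.1 fun h' => h₂ ⟨h, h'⟩]
      · rw [abs_of_neg (by linarith)]
        linarith [not_le.1 fun h' => h₁ ⟨h', h⟩]
    rw [max_eq_left (by linarith)]
    ring

lemma continuous_B (j i : ℕ) : Continuous (B i (j + 2)) := by
  induction j generalizing i with
  | zero =>
      rw [funext (B_two_eq i)]
      fun_prop
  | succ j ih =>
      exact (((continuous_id.sub continuous_const).div_const _).mul (ih i)).add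
        (((continuous_const.sub continuous_id).div_const _).mul (ih (i + 1)))

lemma hasDerivAt_B_of_notMem_range_intCast (j i : ℕ) {t : ℝ}
    (ht : t ∉ range ((↑) : ℤ → ℝ)) :
    HasDerivAt (B i (j + 1)) (B i j t - B (i + 1) j t) t := by
  induction j generalizing i with
  | zero => simpa [B] using hasDerivAt_B_one i ht
  | succ j ih =>
      have hj : (j + 1 : ℝ) ≠ 0 := by positivity
      have hleft : HasDerivAt (fun s : ℝ => (s - i) / (j + 1)) (1 / (j + 1)) t :=
        ((hasDerivAt_id t).sub_const _).div_const _
      have hright : HasDerivAt (fun s : ℝ => (i + (j + 2) - s) / (j + 1)) (-1 / (j + 1)) t := by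
        simpa using ((hasDerivAt_id t).const_sub _).div_const _
      have hrec := (hleft.mul (ih i)).add (hright.mul (ih (i + 1)))
      refine hrec.congr_deriv ?_
      have hkey := B_sub_B_succ_recurrence i j t
      field_simp
      linear_combination -hkey

lemma hasDerivAt_B (j i : ℕ) (t : ℝ) :
    HasDerivAt (B i (j + 3)) (B i (j + 2) t - B (i + 1) (j + 2) t) t := by
  by_cases ht : t ∈ range ((↑) : ℤ → ℝ)
  · obtain ⟨n, rfl⟩ := ht
    exact hasDerivAt_of_eventually_hasDerivAt_of_ne
      ((eventually_nhdsNE_notMem_range_intCast n).mono fun y hy =>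
        hasDerivAt_B_of_notMem_range_intCast (j + 2) i hy)
      (continuous_B (j + 1) i).continuousAt
      ((continuous_B j i).sub (continuous_B j (i + 1))).continuousAt
  · exact hasDerivAt_B_of_notMem_range_intCast (j + 2) i ht

lemma contDiff_B (k i : ℕ) : ContDiff ℝ k (B i (k + 2)) := by
  induction k generalizing i with
  | zero => exact contDiff_zero.2 (continuous_B 0 i)
  | succ k ih =>
      have hderiv : deriv (B i (k + 3)) = fun t => B i (k + 2) t - B (i + 1) (k + 2) t :=
        funext fun t => (hasDerivAt_B k i t).deriv
      rw [Nat.cast_succ, contDiff_succ_iff_deriv, hderiv]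
      exact ⟨fun t => (hasDerivAt_B k i t).differentiableAt, by simp, (ih i).sub (ih (i + 1))⟩

/-- (BS-4): for `j ≥ 2`, the uniform B-spline basis function `B i j` is
`(j − 2)`-times continuously differentiable on all of `ℝ`. -/
theorem bspline_smoothness (i j : ℕ) (hj : 2 ≤ j) :
    ContDiff ℝ (j - 2 : ℕ) (B i j) := by
  obtain ⟨k, rfl⟩ := Nat.exists_eq_add_of_le' hj
  simpa using contDiff_B k i
end

section
/- Let n ≥ 3 be an integer and f : ℝ → ℝ any function. For every real x with 1 < x < n − 1, the function p ↦ Σ_{i=0}^{n+4} W(x − i)·(p − f(i))² of the real variable p has a unique minimizer p* ∈ ℝ, and p* = Σ_{i=0}^{n} B_{i,4}(x + 2)·f(i); that is, the graph of the moving least-squares approximation of order l = 1 with weight function W for the data {(i, f(i)) : i = 0,…,n+4} coincides with the cubic uniform B-spline curve γ(t) = Σ_{i=0}^{n} B_{i,4}(t)·(i, f(i)) (whose first coordinate is t − 2). -/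
/-- The piecewise-cubic weight function. -/
noncomputable def W (x : ℝ) : ℝ :=
  if x < -2 then 0
  else if x < -1 then (1/6) * (x + 2)^3
  else if x < 0 then -(1/2) * x^3 - x^2 + 2/3
  else if x < 1 then (1/2) * x^3 - x^2 + 2/3
  else if x < 2 then -(1/6) * (x - 2)^3
  else 0

/-!
The cubic B-spline `B i 4` is the translate `W (· - i - 2)` of the weight, and the translates
`W (x - i)` form a partition of unity. A least-squares error `∑ wᵢ (p - aᵢ)²` with weights of
total mass one equals `(p - ∑ wᵢ aᵢ)²` plus a constant, so its unique minimizer is the weighted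
mean `∑ W (x - i) f i`, which is the B-spline sum.
-/

theorem sum_mul_sub_sq_eq {ι R : Type*} [CommRing R] {s : Finset ι} {w : ι → R}
    (hw : ∑ i ∈ s, w i = 1) (a : ι → R) (p : R) :
    ∑ i ∈ s, w i * (p - a i) ^ 2 =
      (p - ∑ i ∈ s, w i * a i) ^ 2 + ∑ i ∈ s, w i * (∑ j ∈ s, w j * a j - a i) ^ 2 := by
  set m := ∑ i ∈ s, w i * a i
  rw [← sub_eq_iff_eq_add, ← Finset.sum_sub_distrib]
  calc ∑ i ∈ s, (w i * (p - a i) ^ 2 - w i * (m - a i) ^ 2)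
      = ∑ i ∈ s, ((p ^ 2 - m ^ 2) * w i - 2 * (p - m) * (w i * a i)) :=
        Finset.sum_congr rfl fun i _ => by ring
    _ = (p ^ 2 - m ^ 2) * ∑ i ∈ s, w i - 2 * (p - m) * m := by
        rw [Finset.sum_sub_distrib, ← Finset.mul_sum, ← Finset.mul_sum]
    _ = (p - m) ^ 2 := by rw [hw]; ring

theorem sum_mul_sub_sq_lt_of_ne {ι K : Type*} [CommRing K] [LinearOrder K] [IsStrictOrderedRing K]
    {s : Finset ι} {w : ι → K} (hw : ∑ i ∈ s, w i = 1) (a : ι → K) {p : K}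
    (hp : p ≠ ∑ i ∈ s, w i * a i) :
    ∑ i ∈ s, w i * (∑ j ∈ s, w j * a j - a i) ^ 2 < ∑ i ∈ s, w i * (p - a i) ^ 2 := by
  rw [sum_mul_sub_sq_eq hw a p]
  exact lt_add_of_pos_left _ (sq_pos_of_ne_zero (sub_ne_zero.mpr hp))

theorem B_eq_B_zero_sub : ∀ (i j : ℕ) (t : ℝ), B i j t = B 0 j (t - i)
  | _, 0, _ => by simp only [B]
  | i, 1, t => by simp only [B, Nat.cast_zero, sub_nonneg, zero_add, sub_lt_iff_lt_add']
  | i, j + 2, t => by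
    rw [B, B, B_eq_B_zero_sub i (j + 1), B_eq_B_zero_sub (i + 1) (j + 1),
      B_eq_B_zero_sub 1 (j + 1)]
    push_cast
    ring_nf

theorem B_zero_four (s : ℝ) : B 0 4 s = W (s - 2) := by
  simp only [B, W]
  split_ifs <;> grind

theorem B_four (i : ℕ) (t : ℝ) : B i 4 t = W (t - i - 2) := by
  rw [B_eq_B_zero_sub, B_zero_four]

theorem W_eq_zero_of_le {y : ℝ} (hy : y ≤ -2) : W y = 0 := by
  rcases hy.lt_or_eq with hy | rfl
  · simp [W, hy]
  · norm_num [W]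

theorem W_eq_zero_of_ge {y : ℝ} (hy : 2 ≤ y) : W y = 0 := by
  simp (disch := linarith) only [W, if_neg]

theorem W_add_one_add_W_add_W_sub_one_add_W_sub_two {u : ℝ} (h0 : 0 ≤ u) (h1 : u < 1) :
    W (u + 1) + W u + W (u - 1) + W (u - 2) = 1 := by
  simp (disch := linarith) only [W, if_neg]
  rw [if_pos (by linarith), if_pos (by linarith), if_pos (by linarith), if_pos (by linarith)]
  ring

theorem sum_range_W_sub_eq_one {N : ℕ} {x : ℝ} (h1 : 1 ≤ x) (h2 : x < N - 2) :
    ∑ i ∈ Finset.range N, W (x - i) = 1 := by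
  set m := ⌊x - 1⌋₊
  have hm : (m : ℝ) ≤ x - 1 := Nat.floor_le (by linarith)
  have hm' : x - 1 < m + 1 := Nat.lt_floor_add_one _
  have hmN : m + 3 < N := by exact_mod_cast (show (m : ℝ) + 3 < N by linarith)
  have hsub : Finset.Ico m (m + 4) ⊆ Finset.range N := fun i hi => by
    simp only [Finset.mem_Ico, Finset.mem_range] at hi ⊢
    omega
  -- `W (x - i)` vanishes except at the four nodes `m, …, m + 3`
  rw [← Finset.sum_subset hsub fun i _ hi => ?_]
  · simp only [Finset.sum_Ico_eq_sum_range, add_tsub_cancel_left, Finset.sum_range_succ,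
      Finset.sum_range_zero, Nat.cast_add, Nat.cast_ofNat, Nat.cast_one, Nat.cast_zero]
    convert W_add_one_add_W_add_W_sub_one_add_W_sub_two (u := x - 1 - m) (by linarith)
      (by linarith) using 3 <;> ring_nf
  · simp only [Finset.mem_Ico, not_and_or, not_le, not_lt] at hi
    rcases hi with hi | hi
    · have : (i : ℝ) + 1 ≤ m := by exact_mod_cast hi
      exact W_eq_zero_of_ge (by linarith)
    · have : (m : ℝ) + 4 ≤ i := by exact_mod_cast hi
      exact W_eq_zero_of_le (by linarith)

theorem bspline_is_mls_minimizer_general (n : ℕ) (f : ℝ → ℝ)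
    (x : ℝ) (h1 : 1 < x) (h2 : x < (n : ℝ) - 1)
    (Q : ℝ → ℝ)
    (hQ : Q = fun p => ∑ i ∈ Finset.range (n + 5), W (x - i) * (p - f i) ^ 2)
    (pstar : ℝ)
    (hpstar : pstar = ∑ i ∈ Finset.range (n + 1), B i 4 (x + 2) * f i) :
    ∀ p : ℝ, p ≠ pstar → Q pstar < Q p := by
  have hmass : ∑ i ∈ Finset.range (n + 5), W (x - i) = 1 :=
    sum_range_W_sub_eq_one h1.le (by push_cast; linarith)
  have hmean : pstar = ∑ i ∈ Finset.range (n + 5), W (x - i) * f i :=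
    calc pstar = ∑ i ∈ Finset.range (n + 1), W (x - i) * f i :=
          hpstar.trans <| Finset.sum_congr rfl fun i _ => by
            rw [B_four, add_sub_right_comm, add_sub_cancel_right]
      _ = _ := Finset.sum_subset (Finset.range_subset_range.mpr (by omega)) fun i _ hi => by
          have : (n : ℝ) + 1 ≤ i := by exact_mod_cast not_lt.mp (Finset.mem_range.not.mp hi)
          rw [W_eq_zero_of_le (by linarith), zero_mul]
  intro p hp
  subst hQ
  rw [hmean] at hp ⊢
  exact sum_mul_sub_sq_lt_of_ne hmass (fun i : ℕ => f i) hp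

/-- The moving least-squares approximation of order `l = 1` with weight `W`
for the data `{(i, f i) : i = 0, …, n + 4}` coincides with the cubic uniform
B-spline curve: for `1 < x < n − 1`, the weighted least-squares error
`p ↦ ∑_{i=0}^{n+4} W (x − i) (p − f i)²` has the unique minimizer
`p* = ∑_{i=0}^{n} B i 4 (x + 2) · f i`. -/
theorem bspline_is_mls_minimizer (n : ℕ) (hn : 3 ≤ n) (f : ℝ → ℝ)
    (x : ℝ) (h1 : 1 < x) (h2 : x < (n : ℝ) - 1)
    (Q : ℝ → ℝ)
    (hQ : Q = fun p => ∑ i ∈ Finset.range (n + 5), W (x - i) * (p - f i) ^ 2)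
    (pstar : ℝ)
    (hpstar : pstar = ∑ i ∈ Finset.range (n + 1), B i 4 (x + 2) * f i) :
    ∀ p : ℝ, p ≠ pstar → Q pstar < Q p :=
  bspline_is_mls_minimizer_general n f x h1 h2 Q hQ pstar hpstar
end
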